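/- Let H be a complex Hilbert space, (Σ, ℋ, ρ) a measure space, and F : Σ → B(H) weak* measurable with F(σ) compact for every σ ∈ Σ and with finite lower integral of σ ↦ ‖F(σ)‖. Then the weak* integral ∫_Σ F dρ is a compact operator on H. -/

import Mathlib

open MeasureTheory ENNReal
open scoped InnerProductSpace

/-- The lower integral of a (possibly nonmeasurable) function `h : α → ℝ≥0∞`:
the supremum of integrals of measurable a.e. minorants. -/
noncomputable def lowerIntegral {α : Type*} [MeasurableSpace α] (ρ : Measure α)
    (h : α → ℝ≥0∞) : ℝ≥0∞ :=
  ⨆ (g : α → ℝ≥0∞) (_ : Measurable g) (_ : ∀ᵐ x ∂ρ, g x ≤ h x), ∫⁻ x, g x ∂ρ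

/-!
If the weak* integral `I` were not compact, there would be an orthonormal sequence `eₙ` with
`‖I eₙ‖ > δ > 0`: otherwise `I` is a norm limit of the finite-rank maps `I ∘ P_K`, `K` finite
dimensional. Orthonormal sequences are weakly null, so each compact `F σ` sends `eₙ` to a norm
null sequence, and `⟪F σ eₙ, I eₙ⟫ → 0` pointwise. All these integrands are measurable and
dominated by `‖F σ‖ ‖I‖`; their supremum is then a measurable minorant of this bound, hence
integrable by the finiteness of the lower integral, and dominated convergence gives
`‖I eₙ‖² = ∫ ⟪F σ eₙ, I eₙ⟫ dρ → 0`, a contradiction.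
-/

open Filter Topology

section LowerIntegral

variable {α : Type*} [MeasurableSpace α] {ρ : Measure α}

theorem lintegral_le_lowerIntegral {g h : α → ℝ≥0∞} (hg : AEMeasurable g ρ)
    (hgh : ∀ᵐ x ∂ρ, g x ≤ h x) : ∫⁻ x, g x ∂ρ ≤ lowerIntegral ρ h := by
  rw [lintegral_congr_ae hg.ae_eq_mk]
  exact le_iSup₂_of_le hg.mk hg.measurable_mk <|
    le_iSup_of_le ((hg.ae_eq_mk.symm.le).trans hgh) le_rfl

theorem lowerIntegral_mul_const_le (h : α → ℝ≥0∞) {c : ℝ≥0∞} (hc : c ≠ ∞) :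
    lowerIntegral ρ (fun x => h x * c) ≤ lowerIntegral ρ h * c := by
  refine iSup₂_le fun g hg => iSup_le fun hgh => ?_
  calc ∫⁻ x, g x ∂ρ ≤ ∫⁻ x, g x / c * c ∂ρ := by
        refine lintegral_mono_ae (hgh.mono fun x hx => ?_)
        rcases eq_or_ne c 0 with rfl | hc₀
        · simpa using hx
        · rw [ENNReal.div_mul_cancel hc₀ hc]
    _ = (∫⁻ x, g x / c ∂ρ) * c := lintegral_mul_const _ (hg.div_const c)
    _ ≤ lowerIntegral ρ h * c := by
        gcongr
        exact lintegral_le_lowerIntegral (hg.div_const c).aemeasurable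
          (hgh.mono fun x hx => ENNReal.div_le_of_le_mul hx)

theorem tendsto_integral_of_dominated_convergence_of_lowerIntegral_lt_top
    {E : Type*} [NormedAddCommGroup E] [NormedSpace ℝ E] {f : ℕ → α → E} {g : α → E}
    {h : α → ℝ≥0∞} (hfin : lowerIntegral ρ h < ∞) (hf : ∀ n, AEStronglyMeasurable (f n) ρ)
    (hle : ∀ n, ∀ᵐ x ∂ρ, ‖f n x‖ₑ ≤ h x)
    (hlim : ∀ᵐ x ∂ρ, Tendsto (fun n => f n x) atTop (𝓝 (g x))) :
    Tendsto (fun n => ∫ x, f n x ∂ρ) atTop (𝓝 (∫ x, g x ∂ρ)) := by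
  set b : α → ℝ≥0∞ := fun x => ⨆ n, ‖f n x‖ₑ
  have hb : AEMeasurable b ρ := AEMeasurable.iSup fun n => (hf n).enorm
  have hb_lt : ∫⁻ x, b x ∂ρ < ∞ :=
    (lintegral_le_lowerIntegral hb ((ae_all_iff.2 hle).mono fun x hx => iSup_le hx)).trans_lt hfin
  refine tendsto_integral_of_dominated_convergence (fun x => (b x).toReal) hf
    (integrable_toReal_of_lintegral_ne_top hb hb_lt.ne) (fun n => ?_) hlim
  filter_upwards [ae_lt_top' hb hb_lt.ne] with x hx
  rw [← toReal_enorm]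
  exact ENNReal.toReal_mono hx.ne (le_iSup (fun n => ‖f n x‖ₑ) n)

end LowerIntegral

section CompactOperator

variable {𝕜 E F : Type*} [RCLike 𝕜]

theorem IsCompactOperator.tendsto_zero_of_forall_dual [NormedAddCommGroup E] [NormedSpace 𝕜 E]
    [NormedAddCommGroup F] [NormedSpace 𝕜 F] {T : E →L[𝕜] F} (hT : IsCompactOperator T)
    {e : ℕ → E} (hbdd : Bornology.IsBounded (Set.range e))
    (hw : ∀ ℓ : StrongDual 𝕜 E, Tendsto (fun n => ℓ (e n)) atTop (𝓝 0)) :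
    Tendsto (fun n => T (e n)) atTop (𝓝 0) := by
  obtain ⟨C, hC, hTC⟩ := hT.image_subset_compact_of_bounded hbdd
  refine hC.tendsto_nhds_of_unique_mapClusterPt
    (Eventually.of_forall fun n => hTC ⟨e n, Set.mem_range_self n, rfl⟩) fun z _ hz => ?_
  refine SeparatingDual.eq_zero_of_forall_dual_eq_zero (R := 𝕜) fun ℓ => ?_
  have : MapClusterPt (ℓ z) atTop (fun n => (ℓ ∘L T) (e n)) :=
    hz.continuousAt_comp ℓ.continuous.continuousAt
  exact eq_of_nhds_neBot (ClusterPt.mono this (hw (ℓ ∘L T)))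

theorem Orthonormal.tendsto_dual_apply_zero [NormedAddCommGroup E] [InnerProductSpace 𝕜 E]
    [CompleteSpace E] {e : ℕ → E} (he : Orthonormal 𝕜 e) (ℓ : StrongDual 𝕜 E) :
    Tendsto (fun n => ℓ (e n)) atTop (𝓝 0) := by
  set y := (InnerProductSpace.toDual 𝕜 E).symm ℓ
  have hsq : Tendsto (fun n => ‖ℓ (e n)‖ ^ 2) atTop (𝓝 0) := by
    simpa only [← InnerProductSpace.toDual_symm_apply, norm_inner_symm _ y] using
      (he.inner_products_summable (x := y)).tendsto_atTop_zero
  rw [tendsto_zero_iff_norm_tendsto_zero]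
  simpa using hsq.sqrt

theorem norm_inner_apply_apply_le [NormedAddCommGroup E] [NormedSpace 𝕜 E]
    [NormedAddCommGroup F] [InnerProductSpace 𝕜 F] (A B : E →L[𝕜] F) {x : E} (hx : ‖x‖ ≤ 1) :
    ‖⟪A x, B x⟫_𝕜‖ ≤ ‖A x‖ * ‖B‖ :=
  (norm_inner_le_norm _ _).trans (by gcongr; exact B.unit_le_opNorm x hx)

theorem isCompactOperator_of_forall_exists_finiteDimensional [NormedAddCommGroup E]
    [InnerProductSpace 𝕜 E] [NormedAddCommGroup F] [NormedSpace 𝕜 F] [CompleteSpace F]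
    {T : E →L[𝕜] F} (h : ∀ ε > 0, ∃ K : Submodule 𝕜 E, FiniteDimensional 𝕜 K ∧
      ∀ x ∈ Kᗮ, ‖x‖ = 1 → ‖T x‖ ≤ ε) :
    IsCompactOperator T := by
  refine isClosed_setOfPred_isCompactOperator.closure_subset
    (Metric.mem_closure_iff.2 fun ε hε => ?_)
  obtain ⟨K, hK, hTK⟩ := h (ε / 2) (half_pos hε)
  refine ⟨T ∘L K.starProjection,
    (isCompactOperator_of_locallyCompactSpace_dom K.orthogonalProjectionOnto).clm_comp
      (T ∘L K.subtypeL), ?_⟩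
  have hT_orth : ‖T ∘L Kᗮ.subtypeL‖ ≤ ε / 2 :=
    ContinuousLinearMap.opNorm_le_of_unit_norm (half_pos hε).le fun x hx => hTK x x.2 hx
  have hsub : T - T ∘L K.starProjection = (T ∘L Kᗮ.subtypeL) ∘L Kᗮ.orthogonalProjectionOnto := by
    ext x
    simp [Submodule.orthogonalProjectionOnto_orthogonal]
  calc dist T (T ∘L K.starProjection)
      = ‖(T ∘L Kᗮ.subtypeL) ∘L Kᗮ.orthogonalProjectionOnto‖ := by rw [dist_eq_norm, hsub]
    _ ≤ ‖T ∘L Kᗮ.subtypeL‖ * ‖Kᗮ.orthogonalProjectionOnto‖ :=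
        ContinuousLinearMap.opNorm_comp_le _ _
    _ ≤ ε / 2 * 1 := by gcongr; exact Kᗮ.orthogonalProjectionOnto_norm_le
    _ < ε := by linarith

theorem exists_orthonormal_seq_of_forall_finiteDimensional [NormedAddCommGroup E]
    [InnerProductSpace 𝕜 E] {P : E → Prop}
    (h : ∀ K : Submodule 𝕜 E, FiniteDimensional 𝕜 K → ∃ x ∈ Kᗮ, ‖x‖ = 1 ∧ P x) :
    ∃ e : ℕ → E, Orthonormal 𝕜 e ∧ ∀ n, P (e n) := by
  choose v hvK hv1 hvP using h
  let K : ℕ → {K : Submodule 𝕜 E // FiniteDimensional 𝕜 K} := fun n =>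
    Nat.rec ⟨⊥, inferInstance⟩ (fun _ K => ⟨K.1 ⊔ 𝕜 ∙ v K.1 K.2, have := K.2; inferInstance⟩) n
  have hmono : Monotone fun n => (K n).1 := monotone_nat_of_le_succ fun n => le_sup_left
  have hmem : ∀ m n, m < n → v (K m).1 (K m).2 ∈ (K n).1 := fun m n hmn =>
    hmono hmn (le_sup_right (a := (K m).1) (Submodule.mem_span_singleton_self _))
  refine ⟨fun n => v (K n).1 (K n).2, ⟨fun n => hv1 _ _, fun m n hmn => ?_⟩, fun n => hvP _ _⟩
  rcases hmn.lt_or_gt with hlt | hlt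
  · exact Submodule.inner_right_of_mem_orthogonal (hmem m n hlt) (hvK _ _)
  · exact Submodule.inner_left_of_mem_orthogonal (hmem n m hlt) (hvK _ _)

theorem exists_orthonormal_seq_lt_norm_apply_of_not_isCompactOperator [NormedAddCommGroup E]
    [InnerProductSpace 𝕜 E] [NormedAddCommGroup F] [NormedSpace 𝕜 F] [CompleteSpace F]
    {T : E →L[𝕜] F} (hT : ¬ IsCompactOperator T) :
    ∃ δ > 0, ∃ e : ℕ → E, Orthonormal 𝕜 e ∧ ∀ n, δ < ‖T (e n)‖ := by
  obtain ⟨δ, hδ, hTδ⟩ : ∃ δ > 0, ∀ K : Submodule 𝕜 E, FiniteDimensional 𝕜 K →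
      ∃ x ∈ Kᗮ, ‖x‖ = 1 ∧ δ < ‖T x‖ := by
    by_contra! h
    exact hT (isCompactOperator_of_forall_exists_finiteDimensional h)
  exact ⟨δ, hδ, exists_orthonormal_seq_of_forall_finiteDimensional hTδ⟩

end CompactOperator

/-- If `F : Σ → B(H)` is weak* measurable, takes compact-operator values, and has finite
lower integral of its operator norm, then the weak* integral `∫_Σ F dρ` (the operator `I`
with `⟪I h, k⟫ = ∫ ⟪F σ h, k⟫ dρ(σ)` for all `h, k`) is a compact operator. -/
theorem stmt4 {H : Type*} [NormedAddCommGroup H] [InnerProductSpace ℂ H] [CompleteSpace H]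
    {α : Type*} [MeasurableSpace α] (ρ : Measure α) (F : α → H →L[ℂ] H)
    (hmeas : ∀ h k : H, Measurable fun σ => ⟪F σ h, k⟫_ℂ)
    (hcompact : ∀ σ, IsCompactOperator (F σ))
    (hfin : lowerIntegral ρ (fun σ => (‖F σ‖₊ : ℝ≥0∞)) < ∞) :
    ∀ I : H →L[ℂ] H, (∀ h k : H, ⟪I h, k⟫_ℂ = ∫ σ, ⟪F σ h, k⟫_ℂ ∂ρ) →
      IsCompactOperator I := by
  intro I hI
  by_contra hI_nc
  obtain ⟨δ, hδ, e, he, hIe⟩ := exists_orthonormal_seq_lt_norm_apply_of_not_isCompactOperator hI_nc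
  have he_le : ∀ n, ‖e n‖ ≤ 1 := fun n => (he.1 n).le
  have hFe : ∀ σ, Tendsto (fun n => F σ (e n)) atTop (𝓝 0) := fun σ =>
    (hcompact σ).tendsto_zero_of_forall_dual
      (isBounded_iff_forall_norm_le.2 ⟨1, Set.forall_mem_range.2 he_le⟩)
      he.tendsto_dual_apply_zero
  have hIe_inner : Tendsto (fun n => ⟪I (e n), I (e n)⟫_ℂ) atTop (𝓝 0) := by
    simp only [hI]
    rw [← integral_zero α ℂ]
    refine tendsto_integral_of_dominated_convergence_of_lowerIntegral_lt_top
      (h := fun σ => ‖F σ‖ₑ * ‖I‖ₑ)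
      ((lowerIntegral_mul_const_le _ enorm_ne_top).trans_lt (mul_lt_top hfin enorm_lt_top))
      (fun n => (hmeas _ _).aestronglyMeasurable) (fun n => ae_of_all _ fun σ => ?_)
      (ae_of_all _ fun σ => ?_)
    · rw [← ofReal_norm, ← ofReal_norm, ← ofReal_norm, ← ENNReal.ofReal_mul (norm_nonneg _)]
      exact ENNReal.ofReal_le_ofReal <| (norm_inner_apply_apply_le _ _ (he_le n)).trans
        (by gcongr; exact (F σ).unit_le_opNorm _ (he_le n))
    · exact squeeze_zero_norm (fun n => norm_inner_apply_apply_le _ _ (he_le n))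
        (by simpa using (hFe σ).norm.mul_const ‖I‖)
  have hIe_sq : Tendsto (fun n => ‖I (e n)‖ ^ 2) atTop (𝓝 0) := by
    simpa [inner_self_eq_norm_sq_to_K] using hIe_inner.norm
  obtain ⟨n, hn⟩ := (hIe_sq.eventually (gt_mem_nhds (pow_pos hδ 2))).exists
  exact (pow_lt_pow_left₀ (hIe n) hδ.le two_ne_zero).not_gt hn
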